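/- Fix integers A and a ∈ {1,3} and a positive integer C with gcd(A,C) = 1. Let h be an odd integer and k a positive integer with gcd(h,k) = 1, and suppose either C ∤ 2h, or (C ∤ h and k is even). Then for every integer n ≥ 1, neither nh/k + (Ah/(Ck) + a/2) nor nh/k − (Ah/(Ck) + a/2) is an integer; equivalently, there are no integers n ≥ 1 and r with Ck(2r ∓ a) = 2h(Cn ± A). -/

import Mathlib

/-! If `Ck·x = 2h(Cy + B)` with `B` coprime to `C`, then `C ∣ 2hB`, hence `C ∣ 2h`; when `k = 2k'`
one may first cancel the `2`, getting `C ∣ hB` and hence `C ∣ h`. Clearing denominators turns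
`nh/k ± (Ah/(Ck) + a/2) = m` into such an equation with `B = ±A`. -/

theorem Int.mul_mul_ne_two_mul_mul_add {B C h k : ℤ}
    (hBC : IsCoprime B C) (hS : ¬ C ∣ 2 * h ∨ (¬ C ∣ h ∧ 2 ∣ k)) (x y : ℤ) :
    C * k * x ≠ 2 * h * (C * y + B) := by
  intro heq
  rcases hS with h2h | ⟨hh, k, rfl⟩
  · exact h2h <| hBC.symm.dvd_of_dvd_mul_right ⟨k * x - 2 * h * y, by linear_combination -heq⟩
  · exact hh <| hBC.symm.dvd_of_dvd_mul_right ⟨k * x - h * y, by linarith⟩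

section ClearDenominators

variable {K : Type*} [Field K] [CharZero K] {A C k : K}

theorem mul_div_add_div_add_div_two_eq_iff (hC : C ≠ 0) (hk : k ≠ 0) (x h a m : K) :
    x * h / k + (A * h / (C * k) + a / 2) = m ↔ C * k * (2 * m - a) = 2 * h * (C * x + A) := by
  constructor <;> intro heq
  · field_simp at heq
    linear_combination -heq
  · field_simp
    linear_combination -heq

theorem mul_div_sub_div_add_div_two_eq_iff (hC : C ≠ 0) (hk : k ≠ 0) (x h a m : K) :
    x * h / k - (A * h / (C * k) + a / 2) = m ↔ C * k * (2 * m + a) = 2 * h * (C * x - A) := by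
  constructor <;> intro heq
  · field_simp at heq
    linear_combination -heq
  · field_simp
    linear_combination -heq

end ClearDenominators

theorem stmt8 (A a : ℤ) (C : ℕ) (hC : 0 < C)
    (hgcd : Int.gcd A (C:ℤ) = 1)
    (h : ℤ) (k : ℕ) (hk : 0 < k)
    (hS : ¬ ((C:ℤ) ∣ 2*h) ∨ (¬ ((C:ℤ) ∣ h) ∧ 2 ∣ k)) :
    (∀ n : ℤ, 1 ≤ n → ∀ m : ℤ,
      ((n*h : ℤ):ℚ)/(k:ℚ) + ((A:ℚ)*(h:ℚ)/((C:ℚ)*(k:ℚ)) + (a:ℚ)/2) ≠ (m:ℚ) ∧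
      ((n*h : ℤ):ℚ)/(k:ℚ) - ((A:ℚ)*(h:ℚ)/((C:ℚ)*(k:ℚ)) + (a:ℚ)/2) ≠ (m:ℚ)) ∧
    (∀ n r : ℤ, 1 ≤ n →
      (C:ℤ) * k * (2*r - a) ≠ 2 * h * ((C:ℤ) * n + A) ∧
      (C:ℤ) * k * (2*r + a) ≠ 2 * h * ((C:ℤ) * n - A)) := by
  have hA : IsCoprime A (C:ℤ) := Int.isCoprime_iff_gcd_eq_one.mpr hgcd
  have hS' : ¬ (C:ℤ) ∣ 2 * h ∨ (¬ (C:ℤ) ∣ h ∧ 2 ∣ (k:ℤ)) := by exact_mod_cast hS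
  have hint : ∀ n r : ℤ, (C:ℤ) * k * (2*r - a) ≠ 2 * h * ((C:ℤ) * n + A) ∧
      (C:ℤ) * k * (2*r + a) ≠ 2 * h * ((C:ℤ) * n - A) := fun n r =>
    ⟨Int.mul_mul_ne_two_mul_mul_add hA hS' _ _, by
      simpa only [sub_eq_add_neg] using Int.mul_mul_ne_two_mul_mul_add hA.neg_left hS' (2*r + a) n⟩
  have hC0 : (C:ℚ) ≠ 0 := by positivity
  have hk0 : (k:ℚ) ≠ 0 := by positivity
  refine ⟨fun n _ m => ⟨fun heq => (hint n m).1 ?_, fun heq => (hint n m).2 ?_⟩,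
    fun n r _ => hint n r⟩
  · push_cast at heq
    exact_mod_cast (mul_div_add_div_add_div_two_eq_iff hC0 hk0 _ _ _ _).mp heq
  · push_cast at heq
    exact_mod_cast (mul_div_sub_div_add_div_two_eq_iff hC0 hk0 _ _ _ _).mp heq
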